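/- Let L be a finite-dimensional simple Lie superalgebra over an algebraically closed field F of characteristic not 2. Then every linear super-commuting map f on L is a scalar multiplication: there exists λ ∈ F with f(x) = λx for all x ∈ L. -/

import Mathlib

universe u v

def sSign (F : Type u) [Field F] (a b : Bool) : F := if a && b then -1 else 1

structure LieSuperAlgebra (F : Type u) (L : Type v) [Field F] [AddCommGroup L]
    [Module F L] where
  br : L →ₗ[F] L →ₗ[F] L
  grade : Bool → Submodule F L
  sup_eq_top : grade false ⊔ grade true = ⊤
  inf_eq_bot : grade false ⊓ grade true = ⊥
  br_mem : ∀ a b x y, x ∈ grade a → y ∈ grade b → br x y ∈ grade (xor a b)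
  super_skew : ∀ a b x y, x ∈ grade a → y ∈ grade b →
    br x y = - sSign F a b • br y x
  super_jacobi : ∀ a b x y z, x ∈ grade a → y ∈ grade b →
    br x (br y z) = br (br x y) z + sSign F a b • br y (br x z)

variable {F : Type u} {L : Type v} [Field F] [AddCommGroup L] [Module F L]

namespace LieSuperAlgebra

/-- A graded ideal: closed under bracketing with arbitrary elements, and
spanned by its homogeneous parts. -/
def IsGradedIdeal (A : LieSuperAlgebra F L) (I : Submodule F L) : Prop :=
  (∀ x y, y ∈ I → A.br x y ∈ I) ∧ I = (I ⊓ A.grade false) ⊔ (I ⊓ A.grade true)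

/-- Simplicity: no graded ideals other than 0 and L, and nonabelian. -/
def IsSimple (A : LieSuperAlgebra F L) : Prop :=
  (∀ I : Submodule F L, A.IsGradedIdeal I → I = ⊥ ∨ I = ⊤) ∧ ∃ x y, A.br x y ≠ 0

def IsEven (A : LieSuperAlgebra F L) (f : L →ₗ[F] L) : Prop :=
  ∀ a x, x ∈ A.grade a → f x ∈ A.grade a

def IsOdd (A : LieSuperAlgebra F L) (f : L →ₗ[F] L) : Prop :=
  ∀ a x, x ∈ A.grade a → f x ∈ A.grade (!a)

/-- Even centroid condition: f([x,y]) = [f x, y] = [x, f y]. -/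
def InEvenCentroid (A : LieSuperAlgebra F L) (f : L →ₗ[F] L) : Prop :=
  A.IsEven f ∧ ∀ x y, f (A.br x y) = A.br (f x) y ∧ f (A.br x y) = A.br x (f y)

/-- Odd centroid condition: f([x,y]) = [f x, y] = (-1)^{|x|}[x, f y]. -/
def InOddCentroid (A : LieSuperAlgebra F L) (f : L →ₗ[F] L) : Prop :=
  A.IsOdd f ∧ ∀ a x y, x ∈ A.grade a →
    f (A.br x y) = A.br (f x) y ∧ f (A.br x y) = sSign F a true • A.br x (f y)

/-- Membership in the centroid for a homogeneous map of parity `p`: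
`f ∘ ad x = (-1)^{|f||x|} ad x ∘ f` for all homogeneous `x`. -/
def InCentroid (A : LieSuperAlgebra F L) (p : Bool) (f : L →ₗ[F] L) : Prop :=
  (∀ a x, x ∈ A.grade a → f x ∈ A.grade (xor a p)) ∧
  ∀ a x y, x ∈ A.grade a → f (A.br x y) = sSign F p a • A.br x (f y)

/-- A homogeneous skew-supersymmetric super-biderivation of parity `p`. -/
def IsSuperBiderivation (A : LieSuperAlgebra F L) (p : Bool)
    (φ : L →ₗ[F] L →ₗ[F] L) : Prop :=
  (∀ a b x y, x ∈ A.grade a → y ∈ A.grade b →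
      φ x y ∈ A.grade (xor (xor a b) p)) ∧
  (∀ a b x y, x ∈ A.grade a → y ∈ A.grade b →
      φ x y = - sSign F a b • φ y x) ∧
  (∀ a b x y z, x ∈ A.grade a → y ∈ A.grade b →
      φ x (A.br y z) = A.br (φ x y) z + sSign F (xor p a) b • A.br y (φ x z))

end LieSuperAlgebra

/-!
For an even super-commuting map `g`, the bracket pairs `ker g` trivially with everything in the
image: `[k, g x] = [g k, x] = 0`.

If `g ∘ g = 0`, the span of the brackets `[g x, y]` is a graded ideal (this is where `2 ≠ 0` is
used). Rotating `[g u, [g x, y]]` three times returns it with the sign `-1`, so `[g z, -]`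
annihilates that ideal; either way every `g w` is central, hence `g = 0`. Consequently nilpotent
super-commuting maps vanish.

If `ker g + g L = L`, then `g L + [g L, g L]` is a graded ideal; it is `0`, or it is `L` and then
centralises `ker g`, forcing `ker g = 0`. For an eigenvalue `μ` of `f`, a power of `f - μ` beyond
its Fitting index has a nonzero kernel, hence vanishes: `f - μ` is nilpotent, hence zero.
-/

open Submodule

namespace LieSuperAlgebra

section Grading

variable (A : LieSuperAlgebra F L)

theorem exists_add_eq (x : L) :
    ∃ x₀ ∈ A.grade false, ∃ x₁ ∈ A.grade true, x₀ + x₁ = x :=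
  mem_sup.mp (A.sup_eq_top ▸ mem_top)

theorem grade_induction {P : L → Prop} (hadd : ∀ x y, P x → P y → P (x + y))
    (hgrade : ∀ a x, x ∈ A.grade a → P x) (x : L) : P x := by
  obtain ⟨x₀, h₀, x₁, h₁, rfl⟩ := A.exists_add_eq x
  exact hadd _ _ (hgrade _ _ h₀) (hgrade _ _ h₁)

theorem disjoint_grade {a b : Bool} (hab : a ≠ b) : Disjoint (A.grade a) (A.grade b) := by
  have := disjoint_iff.mpr A.inf_eq_bot
  cases a <;> cases b <;> simp_all [disjoint_comm]

theorem eq_zero_of_add_eq_zero {a b : Bool} (hab : a ≠ b) {u v : L} (hu : u ∈ A.grade a)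
    (hv : v ∈ A.grade b) (h : u + v = 0) : u = 0 :=
  disjoint_def.mp (A.disjoint_grade hab) u hu (eq_neg_of_add_eq_zero_left h ▸ neg_mem hv)

theorem span_eq_sup_inf_grade {s : Set L} (hs : ∀ x ∈ s, ∃ a, x ∈ A.grade a) :
    span F s = (span F s ⊓ A.grade false) ⊔ (span F s ⊓ A.grade true) := by
  refine le_antisymm (span_le.mpr fun x hx => ?_) (sup_le inf_le_left inf_le_left)
  obtain ⟨a, ha⟩ := hs x hx
  cases a
  · exact mem_sup_left ⟨subset_span hx, ha⟩
  · exact mem_sup_right ⟨subset_span hx, ha⟩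

theorem br_mem_span {s : Set L}
    (hs : ∀ a z, z ∈ A.grade a → ∀ w ∈ s, A.br z w ∈ span F s) (z : L) {w : L}
    (hw : w ∈ span F s) : A.br z w ∈ span F s := by
  refine A.grade_induction (P := fun z => A.br z w ∈ span F s)
    (fun x y hx hy => by simpa only [map_add, LinearMap.add_apply] using add_mem hx hy)
    (fun a z hz => ?_) z
  exact (span_le (p := (span F s).comap (A.br z)) |>.mpr (hs a z hz)) hw

theorem apply₂_mem_of_forall_homogeneous {M : Type*} [AddCommGroup M] [Module F M]
    (φ : L →ₗ[F] L →ₗ[F] M) {S : Submodule F M}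
    (h : ∀ a b x y, x ∈ A.grade a → y ∈ A.grade b → φ x y ∈ S) (x y : L) : φ x y ∈ S := by
  refine A.grade_induction (P := fun x => ∀ y, φ x y ∈ S)
    (fun x x' hx hx' y => ?_) (fun a x hx y => ?_) x y
  · simpa only [map_add, LinearMap.add_apply] using add_mem (hx y) (hx' y)
  · exact A.grade_induction (P := fun y => φ x y ∈ S)
      (fun y y' hy hy' => by simpa only [map_add] using add_mem hy hy')
      (fun b y hy => h a b x y hx hy) y

theorem br_eq_zero_of_forall_homogeneous {c : L}
    (h : ∀ a x, x ∈ A.grade a → A.br x c = 0) (x : L) : A.br x c = 0 :=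
  A.grade_induction (fun x y hx hy => by rw [map_add, LinearMap.add_apply, hx, hy, add_zero]) h x

theorem eq_zero_of_forall_br_eq_zero (hA : A.IsSimple) {c : L} (hc : ∀ x, A.br x c = 0) :
    c = 0 := by
  set Z := LinearMap.ker A.br.flip
  have mem_Z {c : L} : c ∈ Z ↔ ∀ x, A.br x c = 0 := by
    simp [Z, LinearMap.ext_iff]
  have hgraded : Z = (Z ⊓ A.grade false) ⊔ (Z ⊓ A.grade true) := by
    refine le_antisymm (fun c hc => ?_) (sup_le inf_le_left inf_le_left)
    obtain ⟨c₀, h₀, c₁, h₁, rfl⟩ := A.exists_add_eq c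
    have hcomp : ∀ a x, x ∈ A.grade a → A.br x c₀ = 0 ∧ A.br x c₁ = 0 := by
      intro a x hx
      have hsum : A.br x c₀ + A.br x c₁ = 0 := by rw [← map_add]; exact mem_Z.mp hc x
      have hx₀ := A.eq_zero_of_add_eq_zero (by simp) (A.br_mem a false x c₀ hx h₀)
        (A.br_mem a true x c₁ hx h₁) hsum
      exact ⟨hx₀, by rwa [hx₀, zero_add] at hsum⟩
    exact add_mem_sup
      ⟨mem_Z.mpr (A.br_eq_zero_of_forall_homogeneous fun a x hx => (hcomp a x hx).1), h₀⟩
      ⟨mem_Z.mpr (A.br_eq_zero_of_forall_homogeneous fun a x hx => (hcomp a x hx).2), h₁⟩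
  have hideal : ∀ x y, y ∈ Z → A.br x y ∈ Z := fun x y hy => mem_Z.mp hy x ▸ Z.zero_mem
  rcases hA.1 Z ⟨hideal, hgraded⟩ with hZ | hZ
  · exact (Submodule.eq_bot_iff Z).mp hZ c (mem_Z.mpr hc)
  · obtain ⟨x, y, hxy⟩ := hA.2
    exact absurd (mem_Z.mp (hZ ▸ mem_top) x) hxy

end Grading

section SuperCommutingMaps

variable (A : LieSuperAlgebra F L)

def superCommutingMaps : Submodule F (Module.End F L) where
  carrier := {g | A.IsEven g ∧ ∀ x y, A.br (g x) y = A.br x (g y)}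
  add_mem' := fun ⟨hgE, hg⟩ ⟨hhE, hh⟩ =>
    ⟨fun a x hx => add_mem (hgE a x hx) (hhE a x hx), fun x y => by simp [hg, hh]⟩
  zero_mem' := ⟨fun _ _ _ => zero_mem _, fun _ _ => by simp⟩
  smul_mem' := fun c _ ⟨hgE, hg⟩ =>
    ⟨fun a x hx => smul_mem _ c (hgE a x hx), fun x y => by simp [hg]⟩

theorem one_mem_superCommutingMaps : 1 ∈ A.superCommutingMaps :=
  ⟨fun _ _ hx => hx, fun _ _ => rfl⟩

variable {A} {g : Module.End F L}

theorem pow_mem_superCommutingMaps (hg : g ∈ A.superCommutingMaps) (n : ℕ) :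
    g ^ n ∈ A.superCommutingMaps := by
  obtain ⟨hgE, hgc⟩ := hg
  induction n with
  | zero => exact A.one_mem_superCommutingMaps
  | succ n ih =>
    refine ⟨fun a x hx => ?_, fun x y => ?_⟩
    · rw [pow_succ, Module.End.mul_apply]
      exact ih.1 a _ (hgE a x hx)
    · calc A.br ((g ^ (n + 1)) x) y = A.br ((g ^ n) (g x)) y := by
            rw [pow_succ, Module.End.mul_apply]
        _ = A.br (g x) ((g ^ n) y) := ih.2 _ _
        _ = A.br x (g ((g ^ n) y)) := hgc _ _
        _ = A.br x ((g ^ (n + 1)) y) := by rw [pow_succ', Module.End.mul_apply]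

end SuperCommutingMaps

section SquareZero

variable (A : LieSuperAlgebra F L) (g : Module.End F L)

-- Spanned by homogeneous brackets only, so that it is visibly graded; by
-- `br_apply_mem_brRangeSpan` it still contains every `[g x, y]`.
def brRangeSpan : Submodule F L :=
  span F {w | ∃ a b x y, x ∈ A.grade a ∧ y ∈ A.grade b ∧ A.br (g x) y = w}

theorem br_apply_mem_brRangeSpan (x y : L) : A.br (g x) y ∈ A.brRangeSpan g :=
  A.apply₂_mem_of_forall_homogeneous (A.br ∘ₗ g) (S := A.brRangeSpan g)
    (fun a b x y hx hy => subset_span ⟨a, b, x, y, hx, hy, rfl⟩) x y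

variable {A g}

-- The sum of the Jacobi expansions of `[z, [g x, y]]` and of `[z, [x, g y]]`.
theorem two_smul_br_br_apply (hg : g ∈ A.superCommutingMaps) {a b : Bool} {z x : L}
    (hz : z ∈ A.grade a) (hx : x ∈ A.grade b) (y : L) :
    (2 : F) • A.br z (A.br (g x) y) = A.br (g (A.br z x)) y + A.br (g z) (A.br x y)
      + sSign F a b • A.br (g x) (A.br z y) := by
  obtain ⟨hgE, hgc⟩ := hg
  have jac₁ := A.super_jacobi a b z (g x) y hz (hgE b x hx)
  have jac₂ := A.super_jacobi a b (g z) x y (hgE a z hz) hx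
  have jac₃ := A.super_jacobi a b z x (g y) hz hx
  rw [← hgc z x] at jac₁
  rw [← hgc x y, ← hgc z y, ← hgc] at jac₃
  rw [two_smul]
  nth_rewrite 1 [jac₃]
  rw [jac₁, jac₂]
  abel

theorem isGradedIdeal_brRangeSpan (h2 : (2 : F) ≠ 0) (hg : g ∈ A.superCommutingMaps) :
    A.IsGradedIdeal (A.brRangeSpan g) := by
  refine ⟨fun z w hw => A.br_mem_span (fun a z hz w hw => ?_) z hw, A.span_eq_sup_inf_grade ?_⟩
  · obtain ⟨b, c, x, y, hx, hy, rfl⟩ := hw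
    rw [← inv_smul_smul₀ h2 (A.br z _), two_smul_br_br_apply hg hz hx y]
    exact smul_mem _ _ (add_mem (add_mem (A.br_apply_mem_brRangeSpan g _ _)
      (A.br_apply_mem_brRangeSpan g _ _)) (smul_mem _ _ (A.br_apply_mem_brRangeSpan g _ _)))
  · rintro w ⟨a, b, x, y, hx, hy, rfl⟩
    exact ⟨xor a b, A.br_mem a b _ _ (hg.1 a x hx) hy⟩

theorem br_apply_br_apply_rotate (hg : g ∈ A.superCommutingMaps) (hgg : g * g = 0)
    {a b c : Bool} {u x y : L} (hu : u ∈ A.grade a) (hx : x ∈ A.grade b) (hy : y ∈ A.grade c) :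
    A.br (g u) (A.br (g x) y) = -sSign F (xor a b) c • A.br (g y) (A.br (g u) x) := by
  obtain ⟨hgE, hgc⟩ := hg
  have hggy : g (g y) = 0 := by rw [← Module.End.mul_apply, hgg, LinearMap.zero_apply]
  calc A.br (g u) (A.br (g x) y) = A.br (g u) (A.br x (g y)) := by rw [hgc x y]
    _ = A.br (A.br (g u) x) (g y) := by
        rw [A.super_jacobi a b _ _ _ (hgE a u hu) hx, hgc u (g y), hggy, map_zero, map_zero,
          smul_zero, add_zero]
    _ = -sSign F (xor a b) c • A.br (g y) (A.br (g u) x) :=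
        A.super_skew _ c _ _ (A.br_mem a b _ _ (hgE a u hu) hx) (hgE c y hy)

theorem br_apply_br_apply_eq_zero (h2 : (2 : F) ≠ 0) (hg : g ∈ A.superCommutingMaps)
    (hgg : g * g = 0) {a b c : Bool} {u x y : L} (hu : u ∈ A.grade a) (hx : x ∈ A.grade b)
    (hy : y ∈ A.grade c) : A.br (g u) (A.br (g x) y) = 0 := by
  have h := br_apply_br_apply_rotate hg hgg hu hx hy
  rw [br_apply_br_apply_rotate hg hgg hy hu hx, br_apply_br_apply_rotate hg hgg hx hy hu,
    smul_smul, smul_smul] at h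
  have hsign : -sSign F (xor a b) c * -sSign F (xor c a) b * -sSign F (xor b c) a = -1 := by
    cases a <;> cases b <;> cases c <;> norm_num [sSign]
  rw [hsign, neg_one_smul, eq_neg_iff_add_eq_zero, ← two_smul F] at h
  exact (smul_eq_zero.mp h).resolve_left h2

theorem eq_zero_of_mul_self_eq_zero (hA : A.IsSimple) (h2 : (2 : F) ≠ 0)
    (hg : g ∈ A.superCommutingMaps) (hgg : g * g = 0) : g = 0 := by
  suffices h : ∀ a z, z ∈ A.grade a → ∀ w, A.br (g z) w = 0 by
    ext w
    refine A.eq_zero_of_forall_br_eq_zero hA (A.br_eq_zero_of_forall_homogeneous fun a z hz => ?_)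
    rw [← hg.2]
    exact h a z hz w
  rcases hA.1 _ (isGradedIdeal_brRangeSpan h2 hg) with hR | hR
  · intro a z _ w
    exact (Submodule.eq_bot_iff _).mp hR _ (A.br_apply_mem_brRangeSpan g z w)
  · intro a z hz w
    have hle : A.brRangeSpan g ≤ LinearMap.ker (A.br (g z)) := by
      refine span_le.mpr ?_
      rintro _ ⟨b, c, x, y, hx, hy, rfl⟩
      exact br_apply_br_apply_eq_zero h2 hg hgg hz hx hy
    exact hle (hR ▸ mem_top)

theorem eq_zero_of_isNilpotent (hA : A.IsSimple) (h2 : (2 : F) ≠ 0)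
    (hg : g ∈ A.superCommutingMaps) (hnil : IsNilpotent g) : g = 0 := by
  obtain ⟨n, hn⟩ := hnil
  suffices h : ∀ k, g ^ 2 ^ k = 0 → g = 0 from h n (pow_eq_zero_of_le Nat.lt_two_pow_self.le hn)
  intro k
  induction k with
  | zero => simp
  | succ k ih =>
    intro hk
    refine ih (eq_zero_of_mul_self_eq_zero hA h2 (pow_mem_superCommutingMaps hg _) ?_)
    rwa [← pow_two, ← pow_mul, ← pow_succ]

end SquareZero

section Fitting

variable (A : LieSuperAlgebra F L) (g : Module.End F L)

def rangeBrRangeSpan : Submodule F L :=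
  span F ({w | ∃ a x, x ∈ A.grade a ∧ g x = w} ∪
    {w | ∃ a b x y, x ∈ A.grade a ∧ y ∈ A.grade b ∧ A.br (g x) (g y) = w})

theorem apply_mem_rangeBrRangeSpan (x : L) : g x ∈ A.rangeBrRangeSpan g :=
  A.grade_induction (P := fun x => g x ∈ A.rangeBrRangeSpan g)
    (fun x y hx hy => by simpa only [map_add] using add_mem hx hy)
    (fun a x hx => subset_span (Or.inl ⟨a, x, hx, rfl⟩)) x

theorem br_apply_apply_mem_rangeBrRangeSpan (x y : L) :
    A.br (g x) (g y) ∈ A.rangeBrRangeSpan g :=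
  A.apply₂_mem_of_forall_homogeneous ((A.br ∘ₗ g).compl₂ g) (S := A.rangeBrRangeSpan g)
    (fun a b x y hx hy => subset_span (Or.inr ⟨a, b, x, y, hx, hy, rfl⟩)) x y

variable {A g}

theorem br_apply_mem_rangeBrRangeSpan (hg : g ∈ A.superCommutingMaps)
    (hcod : Codisjoint (LinearMap.ker g) (LinearMap.range g)) (z y : L) :
    A.br z (g y) ∈ A.rangeBrRangeSpan g := by
  obtain ⟨k, hk, _, ⟨z, rfl⟩, rfl⟩ := mem_sup.mp (hcod.eq_top ▸ mem_top : z ∈ _ ⊔ _)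
  rw [map_add, LinearMap.add_apply, ← hg.2 k y, LinearMap.mem_ker.mp hk, map_zero,
    LinearMap.zero_apply, zero_add]
  exact A.br_apply_apply_mem_rangeBrRangeSpan g z y

theorem isGradedIdeal_rangeBrRangeSpan (hg : g ∈ A.superCommutingMaps)
    (hcod : Codisjoint (LinearMap.ker g) (LinearMap.range g)) :
    A.IsGradedIdeal (A.rangeBrRangeSpan g) := by
  refine ⟨fun z w hw => A.br_mem_span (fun c z hz w hw => ?_) z hw, A.span_eq_sup_inf_grade ?_⟩
  · rcases hw with ⟨a, x, hx, rfl⟩ | ⟨a, b, x, y, hx, hy, rfl⟩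
    · exact br_apply_mem_rangeBrRangeSpan hg hcod z x
    · rw [A.super_jacobi c a z (g x) (g y) hz (hg.1 a x hx), hg.2 x]
      exact add_mem (br_apply_mem_rangeBrRangeSpan hg hcod _ y)
        (smul_mem _ _ (br_apply_mem_rangeBrRangeSpan hg hcod x _))
  · rintro w (⟨a, x, hx, rfl⟩ | ⟨a, b, x, y, hx, hy, rfl⟩)
    · exact ⟨a, hg.1 a x hx⟩
    · exact ⟨xor a b, A.br_mem a b _ _ (hg.1 a x hx) (hg.1 b y hy)⟩

theorem ker_eq_bot_or_eq_zero (hA : A.IsSimple) (hg : g ∈ A.superCommutingMaps)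
    (hcod : Codisjoint (LinearMap.ker g) (LinearMap.range g)) :
    LinearMap.ker g = ⊥ ∨ g = 0 := by
  rcases hA.1 _ (isGradedIdeal_rangeBrRangeSpan hg hcod) with hI | hI
  · exact Or.inr (LinearMap.ext fun x =>
      (Submodule.eq_bot_iff _).mp hI _ (A.apply_mem_rangeBrRangeSpan g x))
  · refine Or.inl ((Submodule.eq_bot_iff _).mpr fun k hk => A.eq_zero_of_forall_br_eq_zero hA ?_)
    have hgk : g k = 0 := hk
    have hle : A.rangeBrRangeSpan g ≤ LinearMap.ker (A.br.flip k) := by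
      refine span_le.mpr ?_
      rintro _ (⟨a, x, hx, rfl⟩ | ⟨a, b, x, y, hx, hy, rfl⟩)
      · simp [hg.2, hgk]
      · have jac := A.super_jacobi a b (g x) (g y) k (hg.1 a x hx) (hg.1 b y hy)
        simp only [hg.2 _ k, hgk, map_zero, smul_zero, add_zero] at jac
        simpa using jac.symm
    intro z
    simpa using hle (hI ▸ mem_top : z ∈ _)

end Fitting

end LieSuperAlgebra

open LieSuperAlgebra

theorem superCommuting_is_scalar
    [IsAlgClosed F] [FiniteDimensional F L] (hchar : ringChar F ≠ 2)
    (A : LieSuperAlgebra F L) (hA : A.IsSimple)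
    (f : L →ₗ[F] L) (hEven : A.IsEven f)
    (hcomm : ∀ x y : L, A.br (f x) y = A.br x (f y)) :
    ∃ lam : F, ∀ x : L, f x = lam • x := by
  have hf : f ∈ A.superCommutingMaps := ⟨hEven, hcomm⟩
  obtain ⟨x, y, hxy⟩ := hA.2
  have : Nontrivial L := ⟨⟨x, 0, by rintro rfl; simp at hxy⟩⟩
  obtain ⟨μ, hμ⟩ := Module.End.exists_eigenvalue f
  obtain ⟨v, hv⟩ := hμ.exists_hasEigenvector
  set h := f - μ • 1
  have hh : h ∈ A.superCommutingMaps :=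
    sub_mem hf (smul_mem _ μ A.one_mem_superCommutingMaps)
  obtain ⟨n, hn⟩ := Filter.eventually_atTop.mp h.eventually_codisjoint_ker_pow_range_pow
  -- `n + 1` rather than `n`: the kernel of `h ^ 0` is trivial.
  have hv_ker : v ∈ LinearMap.ker (h ^ (n + 1)) := by
    simp [h, pow_succ, hv.apply_eq_smul]
  rcases ker_eq_bot_or_eq_zero hA (pow_mem_superCommutingMaps hh _) (hn _ n.le_succ) with
    hker | hzero
  · exact absurd ((Submodule.eq_bot_iff _).mp hker v hv_ker) hv.2
  · have h0 : h = 0 := eq_zero_of_isNilpotent hA (Ring.two_ne_zero hchar) hh ⟨_, hzero⟩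
    exact ⟨μ, fun x => by simpa [h, sub_eq_zero] using LinearMap.congr_fun h0 x⟩
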